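/- arXiv:1406.5432 — 7 statements merged into one kernel-verified Lean document; each statement's English description precedes it below -/
import Mathlib

section
/- Let C be a compact convex subset of ℝⁿ. Then (1/tⁿ)·#{z ∈ ℤⁿ : z ∈ t·C} converges to the Lebesgue measure of C as t → ∞. -/
/-!
Tile `ℝⁿ` by the half-open cubes of side `1/t` with corners `z / t`, `z ∈ ℤⁿ`. The cubes whose
corner lies in `C` have total volume `#(ℤⁿ ∩ t • C) / tⁿ`. They lie in the `1/t`-thickening of `C`,
and together with the `1/t`-thickening of `∂C` they cover `C`: the closed `1/t`-ball around a point
of `C` whose cube corner is outside `C` is connected, so it meets `∂C`. As `t → ∞` the two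
thickenings shrink to `closure C` and `∂C`, and since `∂C` is null for convex `C`, both bounds
tend to `vol C`.
-/

open MeasureTheory Filter Set Pointwise Metric Bornology Topology Fintype Function

theorem IsPreconnected.inter_frontier_nonempty {X : Type*} [TopologicalSpace X] {s t : Set X}
    (hs : IsPreconnected s) (hst : (s ∩ t).Nonempty) (hsdt : (s \ t).Nonempty) :
    (s ∩ frontier t).Nonempty := by
  by_contra! h
  have hcover : s ⊆ interior t ∪ (closure t)ᶜ := fun x hx => by
    by_cases hxi : x ∈ interior t
    · exact Or.inl hxi
    · exact Or.inr fun hxc => eq_empty_iff_forall_notMem.1 h x ⟨hx, hxc, hxi⟩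
  rcases hs.subset_or_subset isOpen_interior isClosed_closure.isOpen_compl
      (disjoint_compl_right.mono_left interior_subset_closure) hcover with hint | hext
  · obtain ⟨x, hxs, hxt⟩ := hsdt
    exact hxt (interior_subset (hint hxs))
  · obtain ⟨x, hxs, hxt⟩ := hst
    exact hext hxs (subset_closure hxt)

theorem mem_cthickening_frontier_of_dist_le {E : Type*} [NormedAddCommGroup E] [NormedSpace ℝ E]
    {s : Set E} {x y : E} {r : ℝ} (hx : x ∈ s) (hy : y ∉ s) (hxy : dist y x ≤ r) :
    x ∈ cthickening r (frontier s) := by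
  obtain ⟨p, hp, hpfr⟩ := isPreconnected_closedBall.inter_frontier_nonempty
    ⟨x, mem_closedBall_self (dist_nonneg.trans hxy), hx⟩ ⟨y, hxy, hy⟩
  exact mem_cthickening_of_dist_le x p r _ hpfr (by rw [dist_comm]; exact hp)

theorem tendsto_measureReal_cthickening {X : Type*} [PseudoMetricSpace X] [ProperSpace X]
    [MeasurableSpace X] [OpensMeasurableSpace X] {μ : Measure X} [IsFiniteMeasureOnCompacts μ]
    {s : Set X} (hs : IsBounded s) :
    Tendsto (fun r => μ.real (cthickening r s)) (𝓝 0) (𝓝 (μ.real (closure s))) :=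
  (ENNReal.tendsto_toReal hs.closure.measure_lt_top.ne).comp
    (tendsto_measure_cthickening ⟨1, one_pos, hs.cthickening.measure_lt_top.ne⟩)

variable {ι : Type*}

def latticePoints (s : Set (ι → ℝ)) : Set (ι → ℤ) := {z | (fun i => (z i : ℝ)) ∈ s}

theorem finite_latticePoints [Fintype ι] {s : Set (ι → ℝ)} (hs : IsBounded s) :
    (latticePoints s).Finite := by
  have hbdd : IsBounded (latticePoints s) :=
    (Real.isometry_intCast.postcomp_pi (α := ι)).antilipschitz.isBounded_preimage hs
  exact (isCompact_of_isClosed_isBounded (isClosed_discrete _) hbdd).finite_of_discrete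

theorem mem_latticePoints_smul_iff {s : Set (ι → ℝ)} {t : ℝ} (ht : t ≠ 0) {z : ι → ℤ} :
    z ∈ latticePoints (t • s) ↔ t⁻¹ • (fun i => (z i : ℝ)) ∈ s :=
  mem_smul_set_iff_inv_smul_mem₀ ht _ _

/-- The half-open cube `∏ i, [z i / t, (z i + 1) / t)`. -/
def scaledCube (t : ℝ) (z : ι → ℤ) : Set (ι → ℝ) := {x | ∀ i, ⌊t * x i⌋ = z i}

theorem scaledCube_eq_pi {t : ℝ} (ht : 0 < t) (z : ι → ℤ) :
    scaledCube t z = univ.pi fun i => Ico ((z i : ℝ) / t) ((z i + 1) / t) := by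
  ext x
  simp only [scaledCube, Set.mem_pi, mem_univ, true_implies, mem_Ico, div_le_iff₀ ht,
    lt_div_iff₀ ht, mul_comm _ t, ← Int.floor_eq_iff]
  rfl

theorem volume_scaledCube [Fintype ι] {t : ℝ} (ht : 0 < t) (z : ι → ℤ) :
    volume (scaledCube t z) = ENNReal.ofReal t⁻¹ ^ card ι := by
  have hside : ∀ i, ((z i : ℝ) + 1) / t - z i / t = t⁻¹ := fun i => by field_simp; ring
  simp [scaledCube_eq_pi ht, volume_pi_pi, Real.volume_Ico, hside]

theorem pairwise_disjoint_scaledCube (t : ℝ) : Pairwise (Disjoint on scaledCube (ι := ι) t) :=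
  fun _ _ hne => disjoint_left.2 fun _ hx hx' => hne (funext fun i => (hx i).symm.trans (hx' i))

theorem dist_le_of_mem_scaledCube [Fintype ι] {t : ℝ} (ht : 0 < t) {z : ι → ℤ} {x : ι → ℝ}
    (hx : x ∈ scaledCube t z) : dist x (t⁻¹ • fun i => (z i : ℝ)) ≤ t⁻¹ := by
  rw [scaledCube_eq_pi ht] at hx
  refine (dist_pi_le_iff (inv_nonneg.2 ht.le)).2 fun i => ?_
  obtain ⟨hlo, hhi⟩ := hx i trivial
  rw [Real.dist_eq, abs_le]
  simp only [Pi.smul_apply, smul_eq_mul, div_eq_inv_mul] at hlo hhi ⊢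
  constructor <;> linarith [inv_pos.2 ht]

theorem volume_biUnion_scaledCube [Fintype ι] {t : ℝ} (ht : 0 < t) (S : Finset (ι → ℤ)) :
    volume (⋃ z ∈ S, scaledCube t z) = S.card * ENNReal.ofReal t⁻¹ ^ card ι := by
  rw [measure_biUnion_finset ((pairwise_disjoint_scaledCube t).set_pairwise _)
    fun z _ => scaledCube_eq_pi ht z ▸ MeasurableSet.univ_pi fun _ => measurableSet_Ico]
  simp [volume_scaledCube ht]

theorem ncard_latticePoints_smul_mul_le_volume_cthickening [Fintype ι] {t : ℝ} (ht : 0 < t)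
    (s : Set (ι → ℝ)) :
    (latticePoints (t • s)).ncard * ENNReal.ofReal t⁻¹ ^ card ι ≤ volume (cthickening t⁻¹ s) := by
  by_cases hfin : (latticePoints (t • s)).Finite
  · rw [ncard_eq_toFinset_card _ hfin, ← volume_biUnion_scaledCube ht]
    refine measure_mono (iUnion₂_subset fun z hz x hx => ?_)
    rw [hfin.mem_toFinset, mem_latticePoints_smul_iff ht.ne'] at hz
    exact mem_cthickening_of_dist_le x _ _ s hz (dist_le_of_mem_scaledCube ht hx)
  · simp [Set.Infinite.ncard hfin]

theorem volume_le_ncard_latticePoints_smul_mul_add [Fintype ι] {s : Set (ι → ℝ)}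
    (hs : IsBounded s) {t : ℝ} (ht : 0 < t) :
    volume s ≤ (latticePoints (t • s)).ncard * ENNReal.ofReal t⁻¹ ^ card ι +
      volume (cthickening t⁻¹ (frontier s)) := by
  have hfin := finite_latticePoints (hs.smul₀ t)
  rw [ncard_eq_toFinset_card _ hfin, ← volume_biUnion_scaledCube ht]
  refine (measure_mono fun x hx => ?_).trans (measure_union_le _ _)
  set z : ι → ℤ := fun i => ⌊t * x i⌋
  have hxz : x ∈ scaledCube t z := fun i => rfl
  by_cases hz : z ∈ latticePoints (t • s)
  · exact Or.inl (mem_biUnion (hfin.mem_toFinset.2 hz) hxz)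
  · rw [mem_latticePoints_smul_iff ht.ne'] at hz
    exact Or.inr (mem_cthickening_frontier_of_dist_le hx hz
      (dist_comm x _ ▸ dist_le_of_mem_scaledCube ht hxz))

theorem ENNReal.toReal_natCast_mul_ofReal_inv_pow (m k : ℕ) {t : ℝ} (ht : 0 < t) :
    ((m : ENNReal) * ENNReal.ofReal t⁻¹ ^ k).toReal = m / t ^ k := by
  rw [ENNReal.toReal_mul, ENNReal.toReal_pow, ENNReal.toReal_natCast,
    ENNReal.toReal_ofReal (inv_nonneg.2 ht.le), inv_pow, div_eq_mul_inv]

theorem tendsto_ncard_latticePoints_smul_div_pow [Fintype ι] {s : Set (ι → ℝ)} (hs : IsBounded s)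
    (hfr : volume (frontier s) = 0) :
    Tendsto (fun t : ℝ => ((latticePoints (t • s)).ncard : ℝ) / t ^ card ι) atTop
      (𝓝 (volume.real s)) := by
  have hfrontier : IsBounded (frontier s) := hs.closure.subset frontier_subset_closure
  have hlower : Tendsto (fun t : ℝ => volume.real s - volume.real (cthickening t⁻¹ (frontier s)))
      atTop (𝓝 (volume.real s)) := by
    have := (tendsto_measureReal_cthickening (μ := volume) hfrontier).comp tendsto_inv_atTop_zero
    rw [isClosed_frontier.closure_eq, measureReal_def, hfr, ENNReal.toReal_zero] at this
    simpa using tendsto_const_nhds.sub this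
  have hupper : Tendsto (fun t : ℝ => volume.real (cthickening t⁻¹ s)) atTop
      (𝓝 (volume.real s)) := by
    have := (tendsto_measureReal_cthickening (μ := volume) hs).comp tendsto_inv_atTop_zero
    rwa [measureReal_def, measure_closure_of_null_frontier hfr, ← measureReal_def] at this
  refine tendsto_of_tendsto_of_tendsto_of_le_of_le' hlower hupper ?_ ?_ <;>
    filter_upwards [eventually_gt_atTop 0] with t ht <;>
    rw [← ENNReal.toReal_natCast_mul_ofReal_inv_pow _ _ ht]
  · rw [sub_le_iff_le_add, measureReal_def, measureReal_def, ← ENNReal.toReal_add (by finiteness)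
      hfrontier.cthickening.measure_lt_top.ne]
    exact ENNReal.toReal_mono (ENNReal.add_ne_top.2 ⟨by finiteness,
      hfrontier.cthickening.measure_lt_top.ne⟩) (volume_le_ncard_latticePoints_smul_mul_add hs ht)
  · exact ENNReal.toReal_mono hs.cthickening.measure_lt_top.ne
      (ncard_latticePoints_smul_mul_le_volume_cthickening ht s)

theorem minkowski_lattice_count_convex
    (n : ℕ) (C : Set (Fin n → ℝ)) (hC : IsCompact C) (hconv : Convex ℝ C) :
    Tendsto (fun t : ℝ =>
      (({z : Fin n → ℤ | (fun i => (z i : ℝ)) ∈ t • C}.ncard : ℝ)) / t ^ n)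
      atTop (nhds (volume C).toReal) := by
  have h := tendsto_ncard_latticePoints_smul_div_pow hC.isBounded (hconv.addHaar_frontier volume)
  rwa [card_fin] at h
end

section
/- Let V be a real vector space with a norm ‖·‖, let μ, ν be elements of a convex cone M in a real vector space of measures, equipped with linear maps h : M → V (homology) and m : M → ℝ≥0 (mass) satisfying ‖h(τ)‖ ≤ m(τ) for all τ ∈ M. Suppose there is a linear functional c on V with c(w) ≤ ‖w‖ for all w, c(h(μ+ν)) = ‖h(μ+ν)‖, and m(μ+ν) = ‖h(μ+ν)‖. Then for all a, b ≥ 0, m(aμ + bν) = ‖h(aμ + bν)‖. -/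
/-!
Since `c` has dual norm at most one, `c ∘ h ≤ ‖h‖ ≤ m` on the cone, so `c ∘ h` calibrates `m`.
Equality at `μ + ν` forces equality at `μ` and at `ν` separately, hence by linearity at every
combination `a • μ + b • ν`; for those in the cone this squeezes `‖h τ‖` between `c (h τ)` and `m τ`.
-/

theorem LinearMap.apply_eq_and_apply_eq_of_apply_add_eq {R M N : Type*} [Semiring R]
    [AddCommMonoid M] [Module R M] [AddCommGroup N] [PartialOrder N] [IsOrderedAddMonoid N]
    [Module R N] {f g : M →ₗ[R] N} {x y : M}
    (hx : f x ≤ g x) (hy : f y ≤ g y) (hxy : f (x + y) = g (x + y)) :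
    f x = g x ∧ f y = g y := by
  rw [map_add, map_add] at hxy
  exact (add_eq_add_iff_eq_and_eq hx hy).mp hxy

theorem minimizing_cone_combinations_general
    {V W : Type*} [NormedAddCommGroup V] [NormedSpace ℝ V]
    [AddCommGroup W] [Module ℝ W]
    (Mc : Set W)
    (hcone : ∀ t : ℝ, 0 ≤ t → ∀ x ∈ Mc, t • x ∈ Mc)
    (hsum : ∀ x ∈ Mc, ∀ y ∈ Mc, x + y ∈ Mc)
    (h : W →ₗ[ℝ] V) (m : W →ₗ[ℝ] ℝ)
    (hdom : ∀ τ ∈ Mc, ‖h τ‖ ≤ m τ)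
    (μ ν : W) (hμ : μ ∈ Mc) (hν : ν ∈ Mc)
    (c : V →ₗ[ℝ] ℝ) (hc : ∀ w, c w ≤ ‖w‖)
    (hceq : c (h (μ + ν)) = ‖h (μ + ν)‖)
    (hmin : m (μ + ν) = ‖h (μ + ν)‖) :
    ∀ a b : ℝ, 0 ≤ a → 0 ≤ b → m (a • μ + b • ν) = ‖h (a • μ + b • ν)‖ := by
  intro a b ha hb
  have hcal_le : ∀ τ ∈ Mc, (c ∘ₗ h) τ ≤ m τ := fun τ hτ => (hc _).trans (hdom τ hτ)
  obtain ⟨hcal_μ, hcal_ν⟩ := LinearMap.apply_eq_and_apply_eq_of_apply_add_eq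
    (hcal_le μ hμ) (hcal_le ν hν) (hceq.trans hmin.symm)
  have hmem : a • μ + b • ν ∈ Mc := hsum _ (hcone a ha μ hμ) _ (hcone b hb ν hν)
  refine le_antisymm ?_ (hdom _ hmem)
  calc m (a • μ + b • ν) = c (h (a • μ + b • ν)) := by
        simp only [map_add, map_smul, ← hcal_μ, ← hcal_ν, LinearMap.comp_apply]
    _ ≤ ‖h (a • μ + b • ν)‖ := hc _

theorem minimizing_cone_combinations
    {V W : Type*} [NormedAddCommGroup V] [NormedSpace ℝ V]
    [AddCommGroup W] [Module ℝ W]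
    (Mc : Set W) (hconvex : Convex ℝ Mc)
    (hcone : ∀ t : ℝ, 0 ≤ t → ∀ x ∈ Mc, t • x ∈ Mc)
    (hsum : ∀ x ∈ Mc, ∀ y ∈ Mc, x + y ∈ Mc)
    (h : W →ₗ[ℝ] V) (m : W →ₗ[ℝ] ℝ)
    (hm0 : ∀ τ ∈ Mc, 0 ≤ m τ)
    (hdom : ∀ τ ∈ Mc, ‖h τ‖ ≤ m τ)
    (μ ν : W) (hμ : μ ∈ Mc) (hν : ν ∈ Mc)
    (c : V →ₗ[ℝ] ℝ) (hc : ∀ w, c w ≤ ‖w‖)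
    (hceq : c (h (μ + ν)) = ‖h (μ + ν)‖)
    (hmin : m (μ + ν) = ‖h (μ + ν)‖) :
    ∀ a b : ℝ, 0 ≤ a → 0 ≤ b → m (a • μ + b • ν) = ‖h (a • μ + b • ν)‖ :=
  minimizing_cone_combinations_general Mc hcone hsum h m hdom μ ν hμ hν c hc hceq hmin
end

section
/- Let (V, ω) be a finite-dimensional symplectic real vector space, L ⊆ V a full-rank lattice with ω integer-valued on L, and W an isotropic subspace spanned by W ∩ L. Then the image of W^⊥ ∩ L in the quotient space W^⊥/W is a lattice (discrete and cocompact additive subgroup) in W^⊥/W. -/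
open Module

/-- The symplectic orthogonal of a subspace. -/
def sympOrth {V : Type*} [AddCommGroup V] [Module ℝ V]
    (ω : V →ₗ[ℝ] V →ₗ[ℝ] ℝ) (W : Submodule ℝ V) : Submodule ℝ V where
  carrier := {v : V | ∀ w ∈ W, ω v w = 0}
  add_mem' := fun {a b} ha hb w hw => by
    simp [map_add, LinearMap.add_apply, ha w hw, hb w hw]
  zero_mem' := fun w hw => by simp
  smul_mem' := fun c a ha w hw => by
    simp [map_smul, LinearMap.smul_apply, ha w hw]

/-! Choose finitely many `bᵢ ∈ W ∩ L` spanning `W`. Then `W^⊥` is the kernel of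
`θ v = (ω v bᵢ)ᵢ`, and `θ` maps `L` into `ℤⁿ`. Since the `ℤ`-rank of a discrete subgroup is the
dimension of its real span, rank–nullity for `θ` on `L` shows that `Λ = L ∩ W^⊥` spans `W^⊥`;
hence every vector of `W^⊥` lies within bounded distance of `Λ`, which gives cocompactness.
Likewise `W ∩ L` is cocompact in `W`, so a class in `W^⊥/W` with a representative of norm `< 1`
that meets `Λ` meets it in a point of bounded norm; there are only finitely many such points,
which gives discreteness. -/

open Submodule Topology

universe u

theorem LinearMap.finrank_range_add_finrank_ker_of_hasRankNullity {R N : Type*} {M : Type u}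
    [Ring R] [HasRankNullity.{u} R] [StrongRankCondition R] [AddCommGroup M] [Module R M]
    [AddCommGroup N] [Module R N] [Module.Finite R M] (f : M →ₗ[R] N) :
    finrank R (LinearMap.range f) + finrank R (LinearMap.ker f) = finrank R M := by
  rw [← f.quotKerEquivRange.finrank_eq]
  exact (LinearMap.ker f).finrank_quotient_add_finrank

theorem Submodule.span_preimage_subtype {R M : Type*} [Semiring R] [AddCommMonoid M]
    [Module R M] (E : Submodule R M) (s : Set M) :
    span R (E.subtype ⁻¹' s) = (span R (s ∩ E)).comap E.subtype := by
  apply map_injective_of_injective E.injective_subtype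
  rw [map_span, map_comap_eq, Set.image_preimage_eq_inter_range, range_subtype, coe_subtype,
    Subtype.range_coe, inf_eq_right.2 (span_le.2 Set.inter_subset_right)]

theorem ker_pi_flip_eq_sympOrth {V ι : Type*} [AddCommGroup V] [Module ℝ V]
    (ω : V →ₗ[ℝ] V →ₗ[ℝ] ℝ) (b : ι → V) :
    LinearMap.ker (LinearMap.pi fun i ↦ ω.flip (b i)) = sympOrth ω (span ℝ (Set.range b)) := by
  ext v
  simp only [LinearMap.mem_ker, funext_iff, LinearMap.pi_apply, LinearMap.flip_apply,
    Pi.zero_apply]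
  constructor
  · exact fun hv w hw ↦ span_le (p := LinearMap.ker (ω v)) |>.2 (Set.range_subset_iff.2 hv) hw
  · exact fun hv i ↦ hv _ (subset_span ⟨i, rfl⟩)

theorem Submodule.discreteTopology_of_forall_eq_intCast {ι : Type*} [Finite ι]
    (N : Submodule ℤ (ι → ℝ)) (hN : ∀ y ∈ N, ∀ i, ∃ k : ℤ, y i = k) : DiscreteTopology N := by
  refine DiscreteTopology.of_subset (ZSpan.discreteTopology_pi_basisFun (ι := ι)) fun y hy ↦ ?_
  refine ((Pi.basisFun ℝ ι).mem_span_iff_repr_mem ℤ y).2 fun i ↦ ?_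
  obtain ⟨k, hk⟩ := hN y hy i
  exact ⟨k, by simp [hk]⟩

section Normed

variable {F : Type*} [NormedAddCommGroup F] [NormedSpace ℝ F]

theorem exists_norm_sub_le_of_mem_span_range {ι : Type*} [Fintype ι] (v : ι → F) {w : F}
    (hw : w ∈ span ℝ (Set.range v)) : ∃ z ∈ span ℤ (Set.range v), ‖w - z‖ ≤ ∑ i, ‖v i‖ := by
  obtain ⟨c, rfl⟩ := (mem_span_range_iff_exists_fun ℝ).1 hw
  refine ⟨∑ i, ⌊c i⌋ • v i, (mem_span_range_iff_exists_fun ℤ).2 ⟨_, rfl⟩, ?_⟩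
  have hfract : ∑ i, c i • v i - ∑ i, ⌊c i⌋ • v i = ∑ i, Int.fract (c i) • v i := by
    simp only [← Finset.sum_sub_distrib, Int.fract, sub_smul, Int.cast_smul_eq_zsmul]
  rw [hfract]
  refine (norm_sum_le _ _).trans (Finset.sum_le_sum fun i _ ↦ ?_)
  rw [norm_smul, Real.norm_of_nonneg (Int.fract_nonneg _)]
  exact mul_le_of_le_one_left (norm_nonneg _) (Int.fract_lt_one _).le

theorem exists_norm_sub_le_of_mem_span (s : Set F) [FiniteDimensional ℝ (span ℝ s)] :
    ∃ R, ∀ w ∈ span ℝ s, ∃ z ∈ span ℤ s, ‖w - z‖ ≤ R := by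
  obtain ⟨v, hvs, hspan, -⟩ := exists_fun_fin_finrank_span_eq ℝ s
  refine ⟨∑ i, ‖v i‖, fun w hw ↦ ?_⟩
  obtain ⟨z, hz, hwz⟩ := exists_norm_sub_le_of_mem_span_range v (hspan ▸ hw)
  exact ⟨z, span_mono (Set.range_subset_iff.2 hvs) hz, hwz⟩

variable [FiniteDimensional ℝ F]

theorem Submodule.finite_inter_ball (Λ : Submodule ℤ F) [DiscreteTopology Λ] (r : ℝ) :
    ((Λ : Set F) ∩ Metric.ball 0 r).Finite := by
  have hΛ : IsClosed (Λ : Set F) := AddSubgroup.isClosed_of_discrete (H := Λ.toAddSubgroup)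
  rw [Set.inter_comm]
  exact Metric.finite_isBounded_inter_isClosed DiscreteTopology.isDiscrete Metric.isBounded_ball hΛ

theorem Real.finrank_span_eq_int_finrank_of_discrete (Λ : Submodule ℤ F) [DiscreteTopology Λ] :
    finrank ℝ (span ℝ (Λ : Set F)) = finrank ℤ Λ := by
  have h := Real.finrank_eq_int_finrank_of_discrete (s := (Λ : Set F)) (by rwa [span_eq])
  rwa [Set.finrank, Set.finrank, span_eq] at h

theorem IsZLattice.span_inter_ker_eq_ker {V : Type*} [NormedAddCommGroup V] [NormedSpace ℝ V]
    [FiniteDimensional ℝ V] (L : Submodule ℤ V) [DiscreteTopology L] [IsZLattice ℝ L]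
    (θ : V →ₗ[ℝ] F) [DiscreteTopology (L.map (θ.restrictScalars ℤ))] :
    span ℝ ((L : Set V) ∩ LinearMap.ker θ) = LinearMap.ker θ := by
  let ψ := θ.restrictScalars ℤ ∘ₗ L.subtype
  let Λ := (LinearMap.ker ψ).map L.subtype
  have hΛ : (Λ : Set V) = (L : Set V) ∩ LinearMap.ker θ := by
    ext x
    simp [Λ, ψ, and_comm]
  have : DiscreteTopology Λ := DiscreteTopology.of_subset ‹_› (hΛ ▸ Set.inter_subset_left)
  have hrange : finrank ℤ (LinearMap.range ψ) = finrank ℝ (LinearMap.range θ) := by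
    rw [LinearMap.range_comp, range_subtype, ← Real.finrank_span_eq_int_finrank_of_discrete,
      map_coe, LinearMap.coe_restrictScalars, ← map_span, IsZLattice.span_top, Submodule.map_top]
  have hker : finrank ℤ (LinearMap.ker ψ) = finrank ℝ (span ℝ (Λ : Set V)) := by
    rw [Real.finrank_span_eq_int_finrank_of_discrete,
      (equivMapOfInjective _ L.injective_subtype _).finrank_eq]
  have hψ := ψ.finrank_range_add_finrank_ker_of_hasRankNullity
  have hθ := θ.finrank_range_add_finrank_ker
  have hL := ZLattice.rank ℝ L
  rw [← hΛ]
  exact eq_of_le_of_finrank_le (hΛ ▸ span_le.2 Set.inter_subset_right) (by omega)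

theorem exists_isCompact_forall_sub_mem_image_mkQ (Λ : Submodule ℤ F)
    (hΛ : span ℝ (Λ : Set F) = ⊤) (W : Submodule ℝ F) :
    ∃ K : Set (F ⧸ W), IsCompact K ∧ ∀ q, ∃ l ∈ W.mkQ '' Λ, q - l ∈ K := by
  obtain ⟨R, hR⟩ := exists_norm_sub_le_of_mem_span (Λ : Set F)
  refine ⟨W.mkQ '' Metric.closedBall 0 R, (isCompact_closedBall 0 R).image W.continuous_mkQ,
    fun q ↦ ?_⟩
  obtain ⟨v, rfl⟩ := W.mkQ_surjective q
  obtain ⟨z, hz, hvz⟩ := hR v (hΛ ▸ mem_top)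
  rw [span_eq] at hz
  exact ⟨W.mkQ z, ⟨z, hz, rfl⟩, v - z, by simpa using hvz, map_sub _ _ _⟩

theorem exists_nhds_inter_image_mkQ_eq_singleton_zero (Λ : Submodule ℤ F) [DiscreteTopology Λ]
    (W : Submodule ℝ F) (hW : W ≤ span ℝ ((W : Set F) ∩ Λ)) :
    ∃ U ∈ 𝓝 (0 : F ⧸ W), U ∩ W.mkQ '' Λ = {0} := by
  obtain ⟨R, hR⟩ := exists_norm_sub_le_of_mem_span ((W : Set F) ∩ Λ)
  set N := W.mkQ '' Metric.ball 0 1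
  have hsub : N ∩ W.mkQ '' Λ ⊆ W.mkQ '' ((Λ : Set F) ∩ Metric.ball 0 (1 + R)) := by
    rintro _ ⟨⟨v, hv, rfl⟩, x, hx, hxv⟩
    obtain ⟨z, hz, hxvz⟩ := hR _ (hW ((Submodule.Quotient.eq W).1 hxv))
    have hzWΛ : z ∈ W.restrictScalars ℤ ⊓ Λ := span_le.2 (fun y hy ↦ hy) hz
    refine ⟨x - z, ⟨Λ.sub_mem hx hzWΛ.2, ?_⟩, ?_⟩
    · rw [mem_ball_zero_iff] at hv ⊢
      calc ‖x - z‖ = ‖v + (x - v - z)‖ := by congr 1; abel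
        _ ≤ ‖v‖ + ‖x - v - z‖ := norm_add_le _ _
        _ < 1 + R := add_lt_add_of_lt_of_le hv hxvz
    · rw [map_sub, (W.mkQ_apply z ▸ (Submodule.Quotient.mk_eq_zero W).2 hzWΛ.1 :), sub_zero, hxv]
  have hfin : (N ∩ W.mkQ '' Λ).Finite := ((Λ.finite_inter_ball _).image _).subset hsub
  have hN : N ∈ 𝓝 0 := (W.isOpenMap_mkQ _ Metric.isOpen_ball).mem_nhds ⟨0, by simp, map_zero _⟩
  have h0 : (0 : F ⧸ W) ∈ N ∩ W.mkQ '' Λ := ⟨mem_of_mem_nhds hN, 0, Λ.zero_mem, map_zero _⟩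
  -- `F ⧸ W` is Hausdorff, so the finitely many nonzero classes in `N` can be removed
  have : IsClosed (W : Set F) := W.closed_of_finiteDimensional
  refine ⟨N \ ((N ∩ W.mkQ '' Λ) \ {0}), Filter.sdiff_mem hN ?_, ?_⟩
  · exact hfin.sdiff.isClosed.compl_mem_nhds fun h ↦ h.2 rfl
  · rw [← Set.inter_sdiff_right_comm, Set.sdiff_sdiff_right_self, Set.inter_singleton_of_mem h0]

end Normed

theorem quotient_lattice_of_integer_isotropic_general
    {V : Type*} [NormedAddCommGroup V] [NormedSpace ℝ V] [FiniteDimensional ℝ V]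
    (ω : V →ₗ[ℝ] V →ₗ[ℝ] ℝ)
    (L : Submodule ℤ V) [DiscreteTopology L] [IsZLattice ℝ L]
    (hint : ∀ x ∈ L, ∀ y ∈ L, ∃ k : ℤ, ω x y = (k : ℝ))
    (W : Submodule ℝ V)
    (hiso : W ≤ sympOrth ω W)
    (hW : W = Submodule.span ℝ ((W : Set V) ∩ (L : Set V))) :
    ∀ S : Set (↥(sympOrth ω W) ⧸ W.comap (sympOrth ω W).subtype),
      S = {q | ∃ x : ↥(sympOrth ω W), (x : V) ∈ L ∧ Submodule.Quotient.mk x = q} →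
      (∃ U ∈ nhds (0 : ↥(sympOrth ω W) ⧸ W.comap (sympOrth ω W).subtype), U ∩ S = {0}) ∧
      (∃ K : Set (↥(sympOrth ω W) ⧸ W.comap (sympOrth ω W).subtype),
        IsCompact K ∧ ∀ q, ∃ l ∈ S, q - l ∈ K) := by
  rintro S rfl
  set E := sympOrth ω W
  obtain ⟨b, hbWL, hbspan, -⟩ := exists_fun_fin_finrank_span_eq ℝ ((W : Set V) ∩ L)
  let θ := LinearMap.pi fun i ↦ ω.flip (b i)
  have hθ : LinearMap.ker θ = E := by rw [ker_pi_flip_eq_sympOrth, hbspan, ← hW]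
  have : DiscreteTopology (L.map (θ.restrictScalars ℤ)) := by
    refine discreteTopology_of_forall_eq_intCast _ ?_
    rintro _ ⟨x, hx, rfl⟩ i
    exact hint x hx (b i) (hbWL i).2
  have hLE : span ℝ ((L : Set V) ∩ E) = E := hθ ▸ IsZLattice.span_inter_ker_eq_ker L θ
  let Λ := ZLattice.comap ℝ L E.subtype
  have : DiscreteTopology Λ := ZLattice.comap_discreteTopology ℝ L
    E.subtype.continuous_of_finiteDimensional E.injective_subtype
  have hΛ : span ℝ (Λ : Set E) = ⊤ := by
    rw [ZLattice.coe_comap, span_preimage_subtype, hLE, comap_subtype_self]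
  have hWΛ : W.comap E.subtype ≤ span ℝ ((W.comap E.subtype : Set E) ∩ Λ) := by
    rw [ZLattice.coe_comap, comap_coe, ← Set.preimage_inter, span_preimage_subtype,
      Set.inter_eq_left.2 fun x hx ↦ hiso hx.1, ← hW]
  exact ⟨exists_nhds_inter_image_mkQ_eq_singleton_zero Λ _ hWΛ,
    exists_isCompact_forall_sub_mem_image_mkQ Λ hΛ _⟩

theorem quotient_lattice_of_integer_isotropic
    {V : Type*} [NormedAddCommGroup V] [NormedSpace ℝ V] [FiniteDimensional ℝ V]
    (ω : V →ₗ[ℝ] V →ₗ[ℝ] ℝ)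
    (halt : ∀ v, ω v v = 0)
    (hnd : ∀ v, (∀ w, ω v w = 0) → v = 0)
    (L : Submodule ℤ V) [DiscreteTopology L] [IsZLattice ℝ L]
    (hint : ∀ x ∈ L, ∀ y ∈ L, ∃ k : ℤ, ω x y = (k : ℝ))
    (W : Submodule ℝ V)
    (hiso : W ≤ sympOrth ω W)
    (hW : W = Submodule.span ℝ ((W : Set V) ∩ (L : Set V))) :
    ∀ S : Set (↥(sympOrth ω W) ⧸ W.comap (sympOrth ω W).subtype),
      S = {q | ∃ x : ↥(sympOrth ω W), (x : V) ∈ L ∧ Submodule.Quotient.mk x = q} →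
      (∃ U ∈ nhds (0 : ↥(sympOrth ω W) ⧸ W.comap (sympOrth ω W).subtype), U ∩ S = {0}) ∧
      (∃ K : Set (↥(sympOrth ω W) ⧸ W.comap (sympOrth ω W).subtype),
        IsCompact K ∧ ∀ q, ∃ l ∈ S, q - l ∈ K) :=
  quotient_lattice_of_integer_isotropic_general ω L hint W hiso hW
end

section
/- Let ‖·‖ be a norm on ℝⁿ and let F ⊆ ℝⁿ be a closed set that is a cone (tF ⊆ F for all t ≥ 0), and let π : ℝⁿ → ℝᵐ be a linear map such that the restriction π|_F is a bijection from F onto ℝᵐ. Then π|_F is a homeomorphism from F onto ℝᵐ. -/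
/-!
Since `π` is injective on the cone `F` and `0 ∈ F`, it does not vanish on the compact set
`F ∩ sphere 0 1`, so `‖π x‖ ≥ ε` there; by homogeneity `‖π x‖ ≥ ε ‖x‖` on all of `F`. Hence
preimages of compact sets under `π|_F` are closed and bounded, i.e. `π|_F` is a proper map, and
a proper continuous bijection is a homeomorphism.
-/

open Set

section ClosedCone

variable {E G : Type*} [NormedAddCommGroup E] [ProperSpace E] [NormedAddCommGroup G] {F : Set E}

theorem isProperMap_domRestrict_of_mul_norm_le (hF : IsClosed F) {π : E → G}
    (hπ : Continuous π) {ε : ℝ} (hε : 0 < ε) (hbound : ∀ x ∈ F, ε * ‖x‖ ≤ ‖π x‖) :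
    IsProperMap (F.domRestrict π) := by
  refine isProperMap_iff_isCompact_preimage.2 ⟨hπ.comp continuous_subtype_val, fun K hK ↦ ?_⟩
  have himage : Subtype.val '' (F.domRestrict π ⁻¹' K) = F ∩ π ⁻¹' K := by
    ext x; simp [domRestrict, and_comm]
  rw [Subtype.isCompact_iff, himage]
  obtain ⟨R, hR⟩ := isBounded_iff_forall_norm_le.1 hK.isBounded
  refine Metric.isCompact_of_isClosed_isBounded (hF.inter (hK.isClosed.preimage hπ)) ?_
  refine isBounded_iff_forall_norm_le.2 ⟨R / ε, fun x ⟨hxF, hxK⟩ ↦ ?_⟩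
  rw [le_div_iff₀' hε]
  exact (hbound x hxF).trans (hR _ hxK)

variable [NormedSpace ℝ E] [NormedSpace ℝ G]

theorem exists_pos_mul_norm_le_norm_of_isClosed_cone (hF : IsClosed F)
    (hcone : ∀ t : ℝ, 0 ≤ t → ∀ x ∈ F, t • x ∈ F) (π : E →L[ℝ] G)
    (hker : ∀ x ∈ F, π x = 0 → x = 0) :
    ∃ ε > 0, ∀ x ∈ F, ε * ‖x‖ ≤ ‖π x‖ := by
  have hS : IsCompact (F ∩ Metric.sphere 0 1) := (isCompact_sphere 0 1).inter_left hF
  have hpos : ∀ x ∈ F ∩ Metric.sphere 0 1, 0 < ‖π x‖ := by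
    rintro x ⟨hxF, hx1⟩
    refine norm_pos_iff.2 fun h ↦ ?_
    simp [hker x hxF h] at hx1
  obtain ⟨ε, hε, hεS⟩ := hS.exists_forall_le' (by fun_prop) hpos
  refine ⟨ε, hε, fun x hxF ↦ ?_⟩
  rcases eq_or_ne x 0 with rfl | hx0
  · simp
  have hx : 0 < ‖x‖ := norm_pos_iff.2 hx0
  have hunit : ‖x‖⁻¹ • x ∈ F ∩ Metric.sphere 0 1 :=
    ⟨hcone _ (inv_nonneg.2 hx.le) x hxF, by simp [norm_smul, hx.ne']⟩
  have := hεS _ hunit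
  rwa [map_smul, norm_smul, norm_inv, norm_norm, le_inv_mul_iff₀ hx, mul_comm] at this

end ClosedCone

theorem cone_projection_homeomorphism
    {E : Type*} [NormedAddCommGroup E] [NormedSpace ℝ E] [FiniteDimensional ℝ E]
    (m : ℕ) (F : Set E) (hclosed : IsClosed F)
    (hcone : ∀ t : ℝ, 0 ≤ t → ∀ x ∈ F, t • x ∈ F)
    (π : E →ₗ[ℝ] (Fin m → ℝ))
    (hinj : Set.InjOn π F) (hsurj : π '' F = Set.univ) :
    ∃ e : F ≃ₜ (Fin m → ℝ), ∀ x : F, e x = π (x : E) := by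
  have hker : ∀ x ∈ F, π x = 0 → x = 0 := fun x hx h ↦
    hinj hx (by simpa using hcone 0 le_rfl x hx) (by rw [h, map_zero])
  obtain ⟨ε, hε, hbound⟩ :=
    exists_pos_mul_norm_le_norm_of_isClosed_cone hclosed hcone π.toContinuousLinearMap hker
  have hproper : IsProperMap (F.domRestrict π) :=
    isProperMap_domRestrict_of_mul_norm_le hclosed π.continuous_of_finiteDimensional hε hbound
  have hbij : (F.domRestrict π).Bijective :=
    ⟨injOn_iff_injective.1 hinj, range_eq_univ.1 (by rw [range_domRestrict, hsurj])⟩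
  exact ⟨(Equiv.ofBijective _ hbij).toHomeomorphOfContinuousClosed hproper.continuous
    hproper.isClosedMap, fun _ ↦ rfl⟩
end

section
/- Let ‖·‖ be a norm on ℝⁿ, F ⊆ ℝⁿ a closed cone (tF ⊆ F for all t ≥ 0), and π : ℝⁿ → ℝᵐ a linear map whose restriction to F is a bijection onto ℝᵐ. Let P₁ = π(F ∩ B̄), where B̄ is the closed unit ball of ‖·‖. Then P₁ is compact, and for every nonzero h ∈ ℝᵐ there exists a unique λ > 0 such that λh lies in the topological boundary of P₁. -/
/-!
Let `σ = invFunOn π F` be the inverse of `π` on `F`. Compactness of the unit sphere of the closed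
cone `F` gives `c * ‖x‖ ≤ ‖π x‖` on `F` for some `c > 0`, so `π` restricted to `F` is proper,
hence a closed map, and `σ` is continuous. Since `σ` is positively homogeneous,
`P₁ = {y | ‖σ y‖ ≤ 1}` is the unit sublevel set of a continuous positively homogeneous gauge,
whose frontier is the unit level set `{y | ‖σ y‖ = 1}`. The ray through `h ≠ 0` meets it only at
`λ = ‖σ h‖⁻¹`.
-/

open Set Function

lemma image_inter_eq_preimage_invFunOn {α β : Type*} [Nonempty α] {f : α → β} {s : Set α}
    (hinj : InjOn f s) (hsurj : f '' s = univ) (t : Set α) :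
    f '' (s ∩ t) = invFunOn f s ⁻¹' t := by
  ext y
  obtain ⟨x, hxs, rfl⟩ : y ∈ f '' s := hsurj ▸ mem_univ y
  rw [hinj.mem_image_iff inter_subset_left hxs, mem_preimage, hinj.leftInvOn_invFunOn hxs]
  exact and_iff_right hxs

lemma frontier_setOf_le_one_of_posHomogeneous {V : Type*} [AddCommGroup V] [Module ℝ V]
    [TopologicalSpace V] [ContinuousSMul ℝ V] {g : V → ℝ} (hg : Continuous g)
    (hhom : ∀ t : ℝ, 0 < t → ∀ y, g (t • y) = t * g y) :
    frontier {y | g y ≤ 1} = {y | g y = 1} := by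
  refine (frontier_le_subset_eq hg continuous_const).antisymm fun y (hy : g y = 1) => ?_
  rw [frontier_eq_closure_inter_closure]
  refine ⟨subset_closure hy.le, mem_closure_of_tendsto (f := fun t : ℝ => t • y)
    (b := nhdsWithin 1 (Ioi 1)) ?_ ?_⟩
  · have hray : Continuous fun t : ℝ => t • y := continuous_id.smul continuous_const
    simpa using (hray.tendsto 1).mono_left nhdsWithin_le_nhds
  · filter_upwards [self_mem_nhdsWithin] with t (ht : 1 < t)
    simpa [hhom t (zero_lt_one.trans ht), hy] using ht

lemma invFunOn_smul_of_cone {E V : Type*} [AddCommGroup E] [Module ℝ E] [AddCommGroup V]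
    [Module ℝ V] {F : Set E} {π : E →ₗ[ℝ] V} (hcone : ∀ t : ℝ, 0 ≤ t → ∀ x ∈ F, t • x ∈ F)
    (hinj : InjOn π F) (hsurj : π '' F = univ) {t : ℝ} (ht : 0 ≤ t) (y : V) :
    invFunOn π F (t • y) = t • invFunOn π F y := by
  obtain ⟨x, hxF, rfl⟩ : y ∈ π '' F := hsurj ▸ mem_univ y
  rw [← map_smul, hinj.leftInvOn_invFunOn hxF, hinj.leftInvOn_invFunOn (hcone t ht x hxF)]

section ConeSection

variable {E V : Type*} [NormedAddCommGroup E] [NormedSpace ℝ E] [FiniteDimensional ℝ E]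
  [NormedAddCommGroup V] [NormedSpace ℝ V] {F : Set E} {π : E →ₗ[ℝ] V}

lemma exists_pos_mul_norm_le_norm_of_injOn_cone (hclosed : IsClosed F)
    (hcone : ∀ t : ℝ, 0 ≤ t → ∀ x ∈ F, t • x ∈ F) (hinj : InjOn π F) :
    ∃ c > 0, ∀ x ∈ F, c * ‖x‖ ≤ ‖π x‖ := by
  have hsphere : ∀ x ∈ F ∩ Metric.sphere 0 1, 0 < ‖π x‖ := by
    rintro x ⟨hxF, hx1⟩
    refine norm_pos_iff.2 fun h0 => ?_
    have h0F : (0 : E) ∈ F := by simpa using hcone 0 le_rfl x hxF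
    have := hinj hxF h0F (by rw [h0, map_zero])
    simp [this] at hx1
  obtain ⟨c, hc, hcle⟩ := ((isCompact_sphere 0 1).inter_left hclosed).exists_forall_le'
    (continuous_norm.comp π.continuous_of_finiteDimensional).continuousOn hsphere
  refine ⟨c, hc, fun x hxF => ?_⟩
  rcases eq_or_ne x 0 with rfl | hx
  · simp
  have hnx : 0 < ‖x‖ := norm_pos_iff.2 hx
  have hunit : ‖x‖⁻¹ • x ∈ F ∩ Metric.sphere 0 1 :=
    ⟨hcone _ (inv_nonneg.2 hnx.le) x hxF, by simp [norm_smul, hnx.ne']⟩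
  have hc_le : c ≤ ‖π (‖x‖⁻¹ • x)‖ := hcle _ hunit
  rwa [map_smul, norm_smul, norm_inv, norm_norm, inv_mul_eq_div, le_div_iff₀ hnx] at hc_le

lemma isCompact_inter_preimage_of_injOn_cone (hclosed : IsClosed F)
    (hcone : ∀ t : ℝ, 0 ≤ t → ∀ x ∈ F, t • x ∈ F) (hinj : InjOn π F) {K : Set V}
    (hK : IsCompact K) : IsCompact (F ∩ π ⁻¹' K) := by
  obtain ⟨c, hc, hcle⟩ := exists_pos_mul_norm_le_norm_of_injOn_cone hclosed hcone hinj
  obtain ⟨R, hR⟩ := isBounded_iff_forall_norm_le.1 hK.isBounded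
  refine (isCompact_closedBall (0 : E) (R / c)).of_isClosed_subset
    (hclosed.inter (hK.isClosed.preimage π.continuous_of_finiteDimensional)) ?_
  rintro x ⟨hxF, hxK⟩
  rw [mem_closedBall_zero_iff, le_div_iff₀ hc, mul_comm]
  exact (hcle x hxF).trans (hR _ hxK)

lemma isProperMap_domRestrict_of_injOn_cone (hclosed : IsClosed F)
    (hcone : ∀ t : ℝ, 0 ≤ t → ∀ x ∈ F, t • x ∈ F) (hinj : InjOn π F) :
    IsProperMap (F.domRestrict π) := by
  refine isProperMap_iff_isCompact_preimage.2
    ⟨π.continuous_of_finiteDimensional.comp continuous_subtype_val, fun K hK => ?_⟩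
  rw [Subtype.isCompact_iff, domRestrict_eq, preimage_comp, Subtype.image_preimage_coe]
  exact isCompact_inter_preimage_of_injOn_cone hclosed hcone hinj hK

lemma continuous_invFunOn_of_injOn_cone (hclosed : IsClosed F)
    (hcone : ∀ t : ℝ, 0 ≤ t → ∀ x ∈ F, t • x ∈ F) (hinj : InjOn π F) (hsurj : π '' F = univ) :
    Continuous (invFunOn π F) := by
  refine continuous_iff_isClosed.2 fun C hC => ?_
  rw [← image_inter_eq_preimage_invFunOn hinj hsurj, inter_comm, ← image_domRestrict]
  exact (isProperMap_domRestrict_of_injOn_cone hclosed hcone hinj).isClosedMap _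
    (hC.preimage continuous_subtype_val)

end ConeSection

theorem cone_projection_unit_part_compact_unique_boundary_ray
    {E : Type*} [NormedAddCommGroup E] [NormedSpace ℝ E] [FiniteDimensional ℝ E]
    (m : ℕ) (F : Set E) (hclosed : IsClosed F)
    (hcone : ∀ t : ℝ, 0 ≤ t → ∀ x ∈ F, t • x ∈ F)
    (π : E →ₗ[ℝ] (Fin m → ℝ))
    (hinj : Set.InjOn π F) (hsurj : π '' F = Set.univ) :
    IsCompact (π '' (F ∩ {x | ‖x‖ ≤ 1})) ∧
      ∀ h : Fin m → ℝ, h ≠ 0 →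
        ∃! l : ℝ, 0 < l ∧ l • h ∈ frontier (π '' (F ∩ {x | ‖x‖ ≤ 1})) := by
  have hgauge : ∀ t : ℝ, 0 < t → ∀ y, ‖invFunOn π F (t • y)‖ = t * ‖invFunOn π F y‖ :=
    fun t ht y => by
      rw [invFunOn_smul_of_cone hcone hinj hsurj ht.le, norm_smul, Real.norm_of_nonneg ht.le]
  refine ⟨?_, fun h hh => ?_⟩
  · simpa only [Metric.closedBall, dist_zero_right] using
      ((isCompact_closedBall (0 : E) 1).inter_left hclosed).image π.continuous_of_finiteDimensional
  have hσ := continuous_invFunOn_of_injOn_cone hclosed hcone hinj hsurj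
  rw [image_inter_eq_preimage_invFunOn hinj hsurj, preimage_ofPred_eq,
    frontier_setOf_le_one_of_posHomogeneous hσ.norm hgauge]
  have hh_mem : h ∈ π '' F := hsurj ▸ mem_univ h
  have hpos : 0 < ‖invFunOn π F h‖ := norm_pos_iff.2 fun h0 => hh <| by
    rw [← (invFunOn_pos hh_mem).2, h0, map_zero]
  refine ⟨‖invFunOn π F h‖⁻¹, ⟨inv_pos.2 hpos, ?_⟩, fun l ⟨hl, hl1⟩ => ?_⟩
  · rw [mem_ofPred_eq, hgauge _ (inv_pos.2 hpos), inv_mul_cancel₀ hpos.ne']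
  · rw [mem_ofPred_eq, hgauge l hl] at hl1
    exact eq_inv_of_mul_eq_one_left hl1
end

section
/- Let K ⊆ ℝ² be a compact set such that for every nonzero v ∈ ℝ² there is a unique λ(v) > 0 with λ(v)·v ∈ ∂K, μv ∈ K for 0 ≤ μ ≤ λ(v), and μv ∉ K for μ > λ(v). Then the boundary ∂K has Lebesgue measure zero. -/
open MeasureTheory Set Pointwise

theorem star_shaped_boundary_null
    (K : Set (Fin 2 → ℝ)) (hK : IsCompact K)
    (hray : ∀ v : Fin 2 → ℝ, v ≠ 0 →
      ∃ lam : ℝ, 0 < lam ∧ lam • v ∈ frontier K ∧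
        (∀ μ : ℝ, 0 ≤ μ → μ ≤ lam → μ • v ∈ K) ∧
        (∀ μ : ℝ, lam < μ → μ • v ∉ K) ∧
        (∀ lam' : ℝ, 0 < lam' → lam' • v ∈ frontier K → lam' = lam)) :
    volume (frontier K) = 0 := by
  have uniq : ∀ x : Fin 2 → ℝ, x ∈ frontier K → x ≠ 0 → ∀ r : ℝ, 0 < r →
      r • x ∈ frontier K → r = 1 := by
    intro x hx hx0 r hr hrx
    obtain ⟨lam, hlam, _, _, _, h5⟩ := hray x hx0
    have h1 : r = lam := h5 r hr hrx
    have h2 : (1 : ℝ) = lam := h5 1 one_pos (by simpa using hx)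
    rw [h1, h2]
  set F : Set (Fin 2 → ℝ) := frontier K \ {0} with hF
  have hFmeas : MeasurableSet F :=
    (isClosed_frontier.measurableSet).diff (measurableSet_singleton 0)
  suffices hvF : volume F = 0 by
    have hsub : frontier K ⊆ F ∪ {0} := by
      intro x hx
      by_cases h : x = 0
      · exact Or.inr (by simp [h])
      · exact Or.inl ⟨hx, h⟩
    have := (measure_mono hsub).trans (measure_union_le (μ := volume) F {0})
    simpa [hvF, measure_singleton] using this
  by_contra hvF
  obtain ⟨R, hR⟩ := (hK.isBounded.subset
    (frontier_subset_closure.trans hK.isClosed.closure_subset)).subset_closedBall 0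
  set t : ℕ → ℝ := fun n => 1 - (1 : ℝ) / (n + 2) with ht
  have htpos : ∀ n, 0 < t n := by
    intro n
    have h2 : (1 : ℝ) / (n + 2) < 1 := by
      rw [div_lt_one (by positivity)]
      have : (0:ℝ) ≤ n := Nat.cast_nonneg n
      linarith
    simp only [ht]; linarith
  have htle : ∀ n, t n ≤ 1 := by
    intro n
    have : (0:ℝ) < (1:ℝ) / (n + 2) := by positivity
    simp only [ht]; linarith
  have htge : ∀ n, (1:ℝ)/2 ≤ t n := by
    intro n
    have h2 : (1 : ℝ) / (n + 2) ≤ 1/2 := by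
      apply div_le_div_of_nonneg_left (by norm_num) (by norm_num)
      have : (0:ℝ) ≤ n := Nat.cast_nonneg n
      linarith
    simp only [ht]; linarith
  have htinj : Function.Injective t := by
    have hsm : StrictMono t := by
      intro a b hab
      have h1 : (1:ℝ)/(b+2) < 1/(a+2) := by
        apply one_div_lt_one_div_of_lt (by positivity)
        have : (a:ℝ) < b := by exact_mod_cast hab
        linarith
      simp only [ht]; linarith
    exact hsm.injective
  -- disjointness
  have hdisj : Pairwise (Function.onFun Disjoint (fun n => t n • F : ℕ → Set (Fin 2 → ℝ))) := by
    intro n m hnm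
    rw [Function.onFun, Set.disjoint_left]
    rintro z ⟨x, hx, rfl⟩ ⟨y, hy, hzy⟩
    -- t m • y = t n • x
    have hy0 : y ≠ 0 := hy.2
    have hzy' : t m • y = t n • x := hzy
    have hxeq : x = (t m / t n) • y := by
      have : x = (t n)⁻¹ • (t m • y) := by
        rw [hzy', smul_smul, inv_mul_cancel₀ (htpos n).ne', one_smul]
      rw [this, smul_smul, div_eq_inv_mul]
    have hrfront : (t m / t n) • y ∈ frontier K := hxeq ▸ hx.1
    have hr1 : t m / t n = 1 :=
      uniq y hy.1 hy0 _ (div_pos (htpos m) (htpos n)) hrfront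
    have : t m = t n := (div_eq_one_iff_eq (htpos n).ne').mp hr1
    exact hnm (htinj this).symm
  -- all scaled sets lie in a fixed closed ball
  have hsubball : ∀ n, t n • F ⊆ Metric.closedBall 0 R := by
    rintro n z ⟨x, hx, rfl⟩
    have hx' : x ∈ Metric.closedBall 0 R := hR hx.1
    simp only [Metric.mem_closedBall, dist_zero_right] at hx' ⊢
    calc ‖t n • x‖ = |t n| * ‖x‖ := by rw [norm_smul, Real.norm_eq_abs]
    _ ≤ 1 * ‖x‖ := by
        apply mul_le_mul_of_nonneg_right _ (norm_nonneg x)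
        rw [abs_of_pos (htpos n)]; exact htle n
    _ ≤ R := by rw [one_mul]; exact hx'
  have hsmeas : ∀ n, MeasurableSet (t n • F) := by
    intro n
    exact hFmeas.const_smul₀ (t n)
  -- measure of each scaled set
  have hvol : ∀ n, ENNReal.ofReal ((1:ℝ)/4) * volume F ≤ volume (t n • F) := by
    intro n
    rw [Measure.addHaar_smul_of_nonneg volume (htpos n).le F]
    apply mul_le_mul_left
    apply ENNReal.ofReal_le_ofReal
    have h12 := htge n
    have : ((1:ℝ)/2)^2 ≤ (t n)^2 := by
      apply pow_le_pow_left₀ (by norm_num) h12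
    calc (1:ℝ)/4 = ((1:ℝ)/2)^2 := by norm_num
    _ ≤ (t n)^2 := this
    _ = t n ^ Module.finrank ℝ (Fin 2 → ℝ) := by norm_num [Module.finrank_fintype_fun_eq_card]
  -- contradiction with finite measure of the ball
  have hunion : (∑' n, volume (t n • F)) = volume (⋃ n, t n • F) :=
    (measure_iUnion hdisj hsmeas).symm
  have hfin : volume (⋃ n, t n • F) < ⊤ := by
    apply lt_of_le_of_lt (measure_mono (iUnion_subset hsubball))
    exact (ProperSpace.isCompact_closedBall 0 R).measure_lt_top
  have hc : ENNReal.ofReal ((1:ℝ)/4) * volume F ≠ 0 := by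
    apply mul_ne_zero _ hvF
    exact ne_of_gt (ENNReal.ofReal_pos.mpr (by norm_num))
  have htop : (∑' n : ℕ, volume (t n • F)) = ⊤ := by
    refine top_unique ?_
    calc (⊤ : ENNReal) = ∑' _ : ℕ, (ENNReal.ofReal ((1:ℝ)/4) * volume F) :=
          (ENNReal.tsum_const_eq_top_of_ne_zero hc).symm
      _ ≤ ∑' n : ℕ, volume (t n • F) := ENNReal.tsum_le_tsum fun n => hvol n
  rw [hunion] at htop
  exact absurd htop hfin.ne
end

section
/- Let ‖·‖ be a norm on ℝⁿ, F ⊆ ℝⁿ a closed cone, and π : ℝⁿ → ℝᵐ a linear map whose restriction to F is injective with π(F) = ℝᵐ. If (hₙ') is a sequence in F such that π(hₙ') converges in ℝᵐ, then (hₙ') is bounded in ℝⁿ. -/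
/-!
On the compact set of unit vectors of the closed cone `F`, the continuous function `‖π ·‖` has
no zero, because `π` is injective on `F` and `π 0 = 0`; so it is bounded below by some `c > 0`.
Scaling within the cone gives `c ‖x‖ ≤ ‖π x‖` on all of `F`, and a convergent sequence
`π (h' n)` is bounded.
-/

open Filter

section ConeBound

variable {E G : Type*} [NormedAddCommGroup E] [NormedSpace ℝ E]
  [NormedAddCommGroup G] [NormedSpace ℝ G] {F : Set E}

theorem mul_norm_le_norm_apply_of_forall_norm_eq_one
    (hcone : ∀ t : ℝ, 0 ≤ t → ∀ x ∈ F, t • x ∈ F)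
    (π : E →ₗ[ℝ] G) {c : ℝ} (hunit : ∀ u ∈ F, ‖u‖ = 1 → c ≤ ‖π u‖) :
    ∀ x ∈ F, c * ‖x‖ ≤ ‖π x‖ := by
  intro x hx
  rcases eq_or_ne x 0 with rfl | hx0
  · simp
  have hpos : 0 < ‖x‖ := norm_pos_iff.mpr hx0
  have hu := hunit (‖x‖⁻¹ • x) (hcone _ (inv_nonneg.mpr hpos.le) x hx)
    (by rw [norm_smul, norm_inv, norm_norm, inv_mul_cancel₀ hpos.ne'])
  rw [map_smul, norm_smul, norm_inv, norm_norm, le_inv_mul_iff₀ hpos] at hu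
  linarith

variable [FiniteDimensional ℝ E]

theorem exists_pos_forall_norm_eq_one_le_norm_apply (hclosed : IsClosed F) (π : E →ₗ[ℝ] G)
    (hker : ∀ x ∈ F, π x = 0 → x = 0) :
    ∃ c > 0, ∀ u ∈ F, ‖u‖ = 1 → c ≤ ‖π u‖ := by
  set K := F ∩ Metric.sphere (0 : E) 1
  have hK : IsCompact K := (isCompact_sphere 0 1).inter_left hclosed
  rcases K.eq_empty_or_nonempty with hempty | hne
  · refine ⟨1, one_pos, fun u hu hu1 => ?_⟩
    exact (Set.eq_empty_iff_forall_notMem.mp hempty u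
      ⟨hu, mem_sphere_zero_iff_norm.mpr hu1⟩).elim
  obtain ⟨u₀, ⟨hu₀F, hu₀1⟩, hmin⟩ := hK.exists_isMinOn hne
    (continuous_norm.comp π.continuous_of_finiteDimensional).continuousOn
  rw [mem_sphere_zero_iff_norm] at hu₀1
  have hπu₀ : π u₀ ≠ 0 := fun h => by simp [hker u₀ hu₀F h] at hu₀1
  exact ⟨‖π u₀‖, norm_pos_iff.mpr hπu₀,
    fun u hu hu1 => hmin ⟨hu, mem_sphere_zero_iff_norm.mpr hu1⟩⟩

theorem exists_pos_mul_norm_le_norm_apply_of_isClosed_cone (hclosed : IsClosed F)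
    (hcone : ∀ t : ℝ, 0 ≤ t → ∀ x ∈ F, t • x ∈ F) (π : E →ₗ[ℝ] G)
    (hker : ∀ x ∈ F, π x = 0 → x = 0) :
    ∃ c > 0, ∀ x ∈ F, c * ‖x‖ ≤ ‖π x‖ :=
  let ⟨c, hc, hunit⟩ := exists_pos_forall_norm_eq_one_le_norm_apply hclosed π hker
  ⟨c, hc, mul_norm_le_norm_apply_of_forall_norm_eq_one hcone π hunit⟩

end ConeBound

theorem cone_projection_proper_general
    {E : Type*} [NormedAddCommGroup E] [NormedSpace ℝ E] [FiniteDimensional ℝ E]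
    (m : ℕ) (F : Set E) (hclosed : IsClosed F) (h0 : (0 : E) ∈ F)
    (hcone : ∀ t : ℝ, 0 ≤ t → ∀ x ∈ F, t • x ∈ F)
    (π : E →ₗ[ℝ] (Fin m → ℝ))
    (hinj : Set.InjOn π F)
    (h' : ℕ → E) (hmem : ∀ n, h' n ∈ F)
    (hconv : ∃ l : Fin m → ℝ, Tendsto (fun n => π (h' n)) atTop (nhds l)) :
    ∃ M : ℝ, ∀ n, ‖h' n‖ ≤ M := by
  have hker : ∀ x ∈ F, π x = 0 → x = 0 := fun x hx hπx =>
    hinj hx h0 (by rw [hπx, map_zero])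
  obtain ⟨c, hc, hbound⟩ :=
    exists_pos_mul_norm_le_norm_apply_of_isClosed_cone hclosed hcone π hker
  obtain ⟨l, hl⟩ := hconv
  obtain ⟨C, hC⟩ := hl.norm.bddAbove_range
  refine ⟨C / c, fun n => ?_⟩
  rw [le_div_iff₀' hc]
  exact (hbound _ (hmem n)).trans (hC ⟨n, rfl⟩)

theorem cone_projection_proper
    {E : Type*} [NormedAddCommGroup E] [NormedSpace ℝ E] [FiniteDimensional ℝ E]
    (m : ℕ) (F : Set E) (hclosed : IsClosed F) (h0 : (0 : E) ∈ F)
    (hcone : ∀ t : ℝ, 0 ≤ t → ∀ x ∈ F, t • x ∈ F)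
    (π : E →ₗ[ℝ] (Fin m → ℝ))
    (hinj : Set.InjOn π F) (hsurj : π '' F = Set.univ)
    (h' : ℕ → E) (hmem : ∀ n, h' n ∈ F)
    (hconv : ∃ l : Fin m → ℝ, Tendsto (fun n => π (h' n)) atTop (nhds l)) :
    ∃ M : ℝ, ∀ n, ‖h' n‖ ≤ M :=
  cone_projection_proper_general m F hclosed h0 hcone π hinj h' hmem hconv
end
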